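/- A nonempty affine preimage of a quasi-Frank-and-Wolfe set is a quasi-Frank-and-Wolfe set. -/

import Mathlib

/-!
Nonempty convex sets without f-asymptotes (such sets are automatically closed) are exactly the
qFW-sets, and having no f-asymptote passes to affine preimages because affine maps on a
finite-dimensional space are Lipschitz.

If `F` is qFW and `M` is an affine subspace disjoint from `F`, the squared distance to `M` is a
convex quadratic function, so it attains its infimum on `F`, which is therefore positive.

Conversely, induct on the dimension. If a quadratic `f`, quasi-convex and bounded below on `C`,
had no minimum there, its sublevel sets above the infimum would be unbounded closed convex sets,
nested, hence with a common recession direction `d`. A quadratic function bounded on a ray is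
constant on its line, so `f` is invariant under translation by `d` on `C` and factors through the
projection along `d`; that projection lowers the dimension and keeps `C` free of f-asymptotes.
-/

open Pointwise

noncomputable section

/-- A quadratic function on a real vector space. -/
def IsQuadratic {E : Type*} [AddCommGroup E] [Module ℝ E] (f : E → ℝ) : Prop :=
  ∃ (B : E →ₗ[ℝ] E →ₗ[ℝ] ℝ) (l : E →ₗ[ℝ] ℝ) (c : ℝ), ∀ x, f x = B x x + l x + c

/-- A quasi-Frank-and-Wolfe set: a convex set on which every quadratic function
which is quasi-convex on the set and bounded below attains its infimum. -/
def IsQFWSet {E : Type*} [AddCommGroup E] [Module ℝ E] (F : Set E) : Prop :=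
  Convex ℝ F ∧ ∀ f : E → ℝ, IsQuadratic f →
    (∀ α : ℝ, Convex ℝ {x ∈ F | f x ≤ α}) → BddBelow (f '' F) →
    ∃ x₀ ∈ F, ∀ x ∈ F, f x₀ ≤ f x

open AffineSpace Bornology Metric Module

theorem eq_zero_of_forall_abs_mul_le {c K : ℝ} (h : ∀ t : ℝ, 0 ≤ t → |c * t| ≤ K) : c = 0 := by
  by_contra hc
  have hK : 0 ≤ K := by simpa using h 0 le_rfl
  have := h ((K + 1) / |c|) (by positivity)
  rw [abs_mul, abs_div, abs_abs, mul_div_cancel₀ _ (abs_pos.2 hc).ne', abs_of_nonneg (by linarith)]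
    at this
  linarith

theorem eq_zero_of_forall_abs_quadratic_le {a b K : ℝ}
    (h : ∀ t : ℝ, 0 ≤ t → |b * t + a * t ^ 2| ≤ K) : a = 0 ∧ b = 0 := by
  have ha : a = 0 := by
    -- `q (2 t) - 2 q t = 2 a t ^ 2` for `q t = b t + a t ^ 2`
    refine eq_zero_of_forall_abs_mul_le (K := 3 * K) fun u hu => ?_
    have h₁ := h √u (Real.sqrt_nonneg u)
    have h₂ := h (2 * √u) (by positivity)
    have hsq : √u ^ 2 = u := Real.sq_sqrt hu
    have : a * u = (b * (2 * √u) + a * (2 * √u) ^ 2) / 2 - (b * √u + a * √u ^ 2) := by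
      linear_combination (-a) * hsq
    rw [this]
    calc _ ≤ |b * (2 * √u) + a * (2 * √u) ^ 2| / 2 + |b * √u + a * √u ^ 2| := by
          rw [← abs_two, ← abs_div, abs_two]; exact abs_sub _ _
      _ ≤ 3 * K := by linarith [abs_nonneg (b * √u + a * √u ^ 2)]
  subst ha
  exact ⟨rfl, eq_zero_of_forall_abs_mul_le fun t ht => by simpa using h t ht⟩

section Algebraic

variable {V W : Type*} [AddCommGroup V] [Module ℝ V] [AddCommGroup W] [Module ℝ W]
  {f : V → ℝ}

theorem IsQuadratic.comp_affineMap {g : W → ℝ} (hg : IsQuadratic g) (A : V →ᵃ[ℝ] W) :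
    IsQuadratic (g ∘ A) := by
  obtain ⟨B, l, c, hB⟩ := hg
  refine ⟨B.compl₁₂ A.linear A.linear,
    (B.flip (A 0)).comp A.linear + (B (A 0)).comp A.linear + l.comp A.linear,
    B (A 0) (A 0) + l (A 0) + c, fun x => ?_⟩
  have hA : A x = A.linear x + A 0 := by simpa using congrFun A.decomp x
  simp only [Function.comp_apply, hB, hA, map_add, LinearMap.add_apply, LinearMap.compl₁₂_apply,
    LinearMap.comp_apply, LinearMap.flip_apply]
  ring

theorem IsQuadratic.exists_apply_add_smul (hf : IsQuadratic f) (x d : V) :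
    ∃ a b : ℝ, ∀ t : ℝ, f (x + t • d) = f x + b * t + a * t ^ 2 := by
  obtain ⟨B, l, c, hB⟩ := hf
  refine ⟨B d d, B x d + B d x + l d, fun t => ?_⟩
  simp only [hB, map_add, map_smul, LinearMap.add_apply, LinearMap.smul_apply, smul_eq_mul]
  ring

theorem IsQuadratic.apply_add_smul_eq_of_bounded (hf : IsQuadratic f) {x d : V} {K : ℝ}
    (h : ∀ t : ℝ, 0 ≤ t → |f (x + t • d) - f x| ≤ K) (t : ℝ) : f (x + t • d) = f x := by
  obtain ⟨a, b, hab⟩ := hf.exists_apply_add_smul x d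
  obtain ⟨rfl, rfl⟩ := eq_zero_of_forall_abs_quadratic_le (a := a) (b := b) (K := K) fun s hs => by
    simpa only [hab, add_assoc, add_sub_cancel_left] using h s hs
  simp [hab]

theorem exists_forall_le_of_comp_eq {C : Set V} {g : W → ℝ} (L : V →ₗ[ℝ] W)
    (hW : IsQFWSet (L '' C)) (hg : IsQuadratic g) (hgf : ∀ x ∈ C, g (L x) = f x)
    (hconv : ∀ α, Convex ℝ {x ∈ C | f x ≤ α}) (hbdd : BddBelow (f '' C)) :
    ∃ x₀ ∈ C, ∀ x ∈ C, f x₀ ≤ f x := by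
  have hsub (α : ℝ) : {z ∈ L '' C | g z ≤ α} = L '' {x ∈ C | f x ≤ α} := by
    ext z
    constructor
    · rintro ⟨⟨x, hx, rfl⟩, hxα⟩
      exact ⟨x, ⟨hx, hgf x hx ▸ hxα⟩, rfl⟩
    · rintro ⟨x, ⟨hx, hxα⟩, rfl⟩
      exact ⟨⟨x, hx, rfl⟩, (hgf x hx).symm ▸ hxα⟩
  have himage : g '' (L '' C) = f '' C := by
    rw [Set.image_image]; exact Set.image_congr hgf
  obtain ⟨_, ⟨x₀, hx₀, rfl⟩, hmin⟩ :=
    hW.2 g hg (fun α => hsub α ▸ (hconv α).linear_image L) (himage ▸ hbdd)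
  exact ⟨x₀, hx₀, fun x hx => hgf x₀ hx₀ ▸ hgf x hx ▸ hmin (L x) ⟨x, hx, rfl⟩⟩

end Algebraic

theorem Submodule.exists_projectionOnto_eq_add_smul {R V : Type*} [Ring R] [AddCommGroup V]
    [Module R V] {p : Submodule R V} {d : V} (hp : IsCompl p (R ∙ d)) (x : V) :
    ∃ s : R, (p.projectionOnto (R ∙ d) hp x : V) = x + s • d := by
  have hx : x - p.projectionOnto (R ∙ d) hp x ∈ R ∙ d := by
    rw [← projectionOnto_apply_eq_zero_iff hp, map_sub, projectionOnto_apply_left, sub_self]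
  obtain ⟨s, hs⟩ := mem_span_singleton.1 hx
  exact ⟨-s, by rw [neg_smul, hs]; abel⟩

section Normed

variable {V W : Type*} [NormedAddCommGroup V] [NormedSpace ℝ V]
  [NormedAddCommGroup W] [NormedSpace ℝ W]

def NoFAsymptote (C : Set V) : Prop :=
  ∀ M : AffineSubspace ℝ V, (M : Set V).Nonempty → Disjoint C M →
    ∃ ε > 0, ∀ x ∈ C, ε ≤ infDist x M

theorem NoFAsymptote.isClosed {C : Set V} (hC : NoFAsymptote C) : IsClosed C := by
  refine isClosed_of_closure_subset fun z hz => ?_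
  by_contra hzC
  obtain ⟨ε, hε, hb⟩ := hC (affineSpan ℝ {z}) (by simp) (by simpa using hzC)
  obtain ⟨x, hx, hxz⟩ := mem_closure_iff.1 hz ε hε
  have := hb x hx
  rw [AffineSubspace.coe_affineSpan_singleton, infDist_singleton, dist_comm] at this
  linarith

theorem NoFAsymptote.preimage [FiniteDimensional ℝ V] {F : Set W} (hF : NoFAsymptote F)
    (T : V →ᵃ[ℝ] W) : NoFAsymptote (T ⁻¹' F) := by
  intro M hM hdisj
  have hTM : ((M.map T : AffineSubspace ℝ W) : Set W).Nonempty := by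
    rw [AffineSubspace.coe_map]; exact hM.image T
  have hTdisj : Disjoint F (M.map T) := by
    rw [AffineSubspace.coe_map, Set.disjoint_image_right]; exact hdisj
  obtain ⟨ε, hε, hb⟩ := hF _ hTM hTdisj
  set K := ‖LinearMap.toContinuousLinearMap T.linear‖
  refine ⟨ε / (K + 1), by positivity, fun x hx => (le_infDist hM).2 fun p hp => ?_⟩
  rw [div_le_iff₀ (by positivity)]
  calc ε ≤ infDist (T x) (M.map T) := hb _ hx
    _ ≤ dist (T x) (T p) := infDist_le_dist_of_mem (AffineSubspace.mem_map_of_mem T hp)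
    _ = ‖LinearMap.toContinuousLinearMap T.linear (x - p)‖ := by
      rw [dist_eq_norm, LinearMap.coe_toContinuousLinearMap', ← vsub_eq_sub x p,
        AffineMap.linearMap_vsub, vsub_eq_sub]
    _ ≤ K * dist x p := by rw [dist_eq_norm]; exact ContinuousLinearMap.le_opNorm _ _
    _ ≤ dist x p * (K + 1) := by nlinarith [dist_nonneg (x := x) (y := p)]

theorem NoFAsymptote.image [FiniteDimensional ℝ W] {C : Set V} (hC : NoFAsymptote C)
    {L : V →ₗ[ℝ] W} (hL : Function.Surjective L) : NoFAsymptote (L '' C) := by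
  intro M hM hdisj
  obtain ⟨R, hR⟩ := L.exists_rightInverse_of_surjective (LinearMap.range_eq_top.2 hL)
  have hLR (w : W) : L (R w) = w := LinearMap.congr_fun hR w
  have hLM : ((M.comap L.toAffineMap : AffineSubspace ℝ V) : Set V).Nonempty := by
    obtain ⟨m, hm⟩ := hM
    exact ⟨R m, by simpa [hLR] using hm⟩
  have hLdisj : Disjoint C (M.comap L.toAffineMap) := by
    rw [AffineSubspace.coe_comap, ← Set.disjoint_image_left]; exact hdisj
  obtain ⟨ε, hε, hb⟩ := hC _ hLM hLdisj
  set K := ‖LinearMap.toContinuousLinearMap R‖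
  refine ⟨ε / (K + 1), by positivity, Set.forall_mem_image.2 fun x hx =>
    (le_infDist hM).2 fun m hm => ?_⟩
  have hy : x + R (m - L x) ∈ M.comap L.toAffineMap := by simpa [hLR] using hm
  rw [div_le_iff₀ (by positivity)]
  calc ε ≤ infDist x (M.comap L.toAffineMap) := hb x hx
    _ ≤ dist x (x + R (m - L x)) := infDist_le_dist_of_mem hy
    _ = ‖LinearMap.toContinuousLinearMap R (m - L x)‖ := by simp [dist_eq_norm, norm_sub_rev]
    _ ≤ K * dist (L x) m := by
      rw [dist_comm, dist_eq_norm]; exact ContinuousLinearMap.le_opNorm _ _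
    _ ≤ dist (L x) m * (K + 1) := by nlinarith [dist_nonneg (x := L x) (y := m)]

end Normed

section InnerProduct

variable {V : Type*} [NormedAddCommGroup V] [InnerProductSpace ℝ V]

theorem isQuadratic_norm_sq : IsQuadratic fun x : V => ‖x‖ ^ 2 :=
  ⟨innerₗ V, 0, 0, fun x => by simp⟩

theorem AffineSubspace.exists_affineMap_norm_eq_infDist (M : AffineSubspace ℝ V) [Nonempty M]
    [M.direction.HasOrthogonalProjection] :
    ∃ R : V →ᵃ[ℝ] V, ∀ y, ‖R y‖ = infDist y M :=
  ⟨AffineMap.id ℝ V - M.subtype.comp (EuclideanGeometry.orthogonalProjection M), fun y => by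
    simpa [dist_eq_norm] using EuclideanGeometry.dist_orthogonalProjection_eq_infDist M y⟩

theorem IsQFWSet.noFAsymptote [FiniteDimensional ℝ V] {F : Set V} (hF : IsQFWSet F) :
    NoFAsymptote F := by
  intro M hM hdisj
  have : Nonempty M := hM.to_subtype
  obtain ⟨R, hR⟩ := M.exists_affineMap_norm_eq_infDist
  have hconv : ConvexOn ℝ F fun y => ‖R y‖ ^ 2 :=
    ((convexOn_univ_norm.comp_affineMap R).pow (fun _ _ => norm_nonneg _) 2).subset
      (Set.subset_univ _) hF.1
  obtain ⟨y₀, hy₀, hmin⟩ := hF.2 _ (isQuadratic_norm_sq.comp_affineMap R) hconv.convex_le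
    ⟨0, by rintro _ ⟨y, -, rfl⟩; exact sq_nonneg _⟩
  refine ⟨infDist y₀ M, (M.closed_of_finiteDimensional.notMem_iff_infDist_pos hM).1
    (Set.disjoint_left.1 hdisj hy₀), fun x hx => ?_⟩
  have := hmin x hx
  simp only [Function.comp_apply, hR] at this
  exact (pow_le_pow_iff_left₀ infDist_nonneg infDist_nonneg two_ne_zero).1 this

end InnerProduct

theorem exists_forall_le_of_isCompact_sublevel {X : Type*} [TopologicalSpace X] {C : Set X}
    {f : X → ℝ} {α : ℝ} (hcpt : IsCompact {x ∈ C | f x ≤ α}) (hne : {x ∈ C | f x ≤ α}.Nonempty)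
    (hf : ContinuousOn f {x ∈ C | f x ≤ α}) : ∃ x₀ ∈ C, ∀ x ∈ C, f x₀ ≤ f x := by
  obtain ⟨x₀, hx₀, hmin⟩ := hcpt.exists_isMinOn hne hf
  refine ⟨x₀, hx₀.1, fun x hx => ?_⟩
  rcases le_or_gt (f x) α with hxα | hxα
  · exact hmin ⟨hx, hxα⟩
  · exact hx₀.2.trans hxα.le

section FiniteDimensional

variable {V : Type*} [NormedAddCommGroup V] [NormedSpace ℝ V] [FiniteDimensional ℝ V]

theorem IsQuadratic.continuous {f : V → ℝ} (hf : IsQuadratic f) : Continuous f := by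
  obtain ⟨B, l, c, hB⟩ := hf
  rw [show f = fun x => B x x + l x + c from funext hB]
  have hB : Continuous fun x => B x x :=
    B.toContinuousBilinearMap.continuous.clm_apply continuous_id
  exact (hB.add l.continuous_of_finiteDimensional).add continuous_const

theorem exists_ne_zero_forall_mem_asymptoticCone {S : ℕ → Set V} (hS : Antitone S)
    (hunbdd : ∀ k, ¬IsBounded (S k)) : ∃ d ≠ 0, ∀ k, d ∈ asymptoticCone ℝ (S k) := by
  set D : ℕ → Set V := fun k => asymptoticCone ℝ (S k) ∩ sphere 0 1
  have hD_ne (k : ℕ) : (D k).Nonempty := by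
    obtain ⟨v, hv, hvS⟩ := not_bounded_iff_exists_ne_zero_mem_asymptoticCone.1 (hunbdd k)
    refine ⟨‖v‖⁻¹ • v, smul_mem_asymptoticCone (by positivity) hvS, ?_⟩
    rw [mem_sphere_zero_iff_norm, norm_smul, norm_inv, norm_norm,
      inv_mul_cancel₀ (norm_ne_zero_iff.2 hv)]
  have hD_closed (k : ℕ) : IsClosed (D k) := isClosed_asymptoticCone.inter isClosed_sphere
  obtain ⟨d, hd⟩ := IsCompact.nonempty_iInter_of_sequence_nonempty_isCompact_isClosed D
    (fun k => Set.inter_subset_inter_left _ (asymptoticCone_mono (hS k.le_succ))) hD_ne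
    ((isCompact_sphere 0 1).of_isClosed_subset (hD_closed 0) Set.inter_subset_right) hD_closed
  rw [Set.mem_iInter] at hd
  exact ⟨d, ne_zero_of_mem_unit_sphere ⟨d, (hd 0).2⟩, fun k => (hd k).1⟩

theorem IsQuadratic.exists_invariant_direction {C : Set V} (hC : IsClosed C) (hne : C.Nonempty)
    {f : V → ℝ} (hf : IsQuadratic f) (hconv : ∀ α, Convex ℝ {x ∈ C | f x ≤ α})
    (hbdd : BddBelow (f '' C)) (hmin : ∀ x ∈ C, ∃ y ∈ C, f y < f x) :
    ∃ d ≠ 0, ∀ x ∈ C, ∀ t : ℝ, f (x + t • d) = f x := by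
  set μ := sInf (f '' C)
  have hμ_lt (x : V) (hx : x ∈ C) : μ < f x := by
    obtain ⟨y, hy, hyx⟩ := hmin x hx
    exact (csInf_le hbdd ⟨y, hy, rfl⟩).trans_lt hyx
  have hsub_closed (α : ℝ) : IsClosed {x ∈ C | f x ≤ α} :=
    hC.inter (isClosed_le hf.continuous continuous_const)
  obtain ⟨u, hu_anti, hu_gt, hu_lim⟩ := exists_seq_strictAnti_tendsto μ
  have hunbdd (k : ℕ) : ¬IsBounded {x ∈ C | f x ≤ u k} := by
    intro hbd
    have hne_k : {x ∈ C | f x ≤ u k}.Nonempty := by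
      obtain ⟨_, ⟨x, hx, rfl⟩, hxu⟩ := exists_lt_of_csInf_lt (hne.image f) (hu_gt k)
      exact ⟨x, hx, hxu.le⟩
    obtain ⟨x₀, hx₀, hx₀min⟩ := exists_forall_le_of_isCompact_sublevel
      (isCompact_of_isClosed_isBounded (hsub_closed _) hbd) hne_k hf.continuous.continuousOn
    obtain ⟨y, hy, hyx⟩ := hmin x₀ hx₀
    exact (hx₀min y hy).not_gt hyx
  obtain ⟨d, hd0, hd⟩ := exists_ne_zero_forall_mem_asymptoticCone
    (S := fun k => {x ∈ C | f x ≤ u k})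
    (fun i j hij x hx => ⟨hx.1, hx.2.trans (hu_anti.antitone hij)⟩) hunbdd
  refine ⟨d, hd0, fun x hx => hf.apply_add_smul_eq_of_bounded (K := f x - μ) fun t ht => ?_⟩
  obtain ⟨k, hk⟩ := (hu_lim.eventually (gt_mem_nhds (hμ_lt x hx))).exists
  have hsub : {y ∈ C | f y ≤ u k} ⊆ {y ∈ C | f y ≤ f x} := fun y hy => ⟨hy.1, hy.2.trans hk.le⟩
  have hray : t • d +ᵥ x ∈ {y ∈ C | f y ≤ f x} :=
    (hconv (f x)).smul_vadd_mem_of_isClosed_of_mem_asymptoticCone (hsub_closed _) ht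
      (asymptoticCone_mono hsub (hd k)) ⟨hx, le_rfl⟩
  rw [vadd_eq_add, add_comm] at hray
  have hμ_le := csInf_le hbdd ⟨_, hray.1, rfl⟩
  rw [abs_le]
  constructor <;> linarith [hray.2]

theorem NoFAsymptote.isQFWSet {C : Set V} (hCa : NoFAsymptote C) (hC : Convex ℝ C)
    (hne : C.Nonempty) : IsQFWSet C := by
  induction hn : finrank ℝ V using Nat.strong_induction_on generalizing V with
  | _ n ih =>
  refine ⟨hC, fun f hf hconv hbdd => ?_⟩
  by_contra! hmin
  obtain ⟨d, hd0, hd⟩ := hf.exists_invariant_direction hCa.isClosed hne hconv hbdd hmin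
  obtain ⟨p, hp⟩ := (ℝ ∙ d).exists_isCompl
  set π := p.projectionOnto (ℝ ∙ d) hp.symm
  have hrank : finrank ℝ p < n := by
    have := Submodule.finrank_add_eq_of_isCompl hp
    rw [finrank_span_singleton hd0] at this
    omega
  have hπ (x : V) (hx : x ∈ C) : f (π x) = f x := by
    obtain ⟨s, hs⟩ := Submodule.exists_projectionOnto_eq_add_smul hp.symm x
    rw [hs, hd x hx]
  obtain ⟨x₀, hx₀, hx₀min⟩ := exists_forall_le_of_comp_eq π
    (ih _ hrank (hCa.image (p.projectionOnto_surjective _)) (hC.linear_image π) (hne.image π) rfl)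
    (hf.comp_affineMap p.subtype.toAffineMap) hπ hconv hbdd
  obtain ⟨y, hy, hyx⟩ := hmin x₀ hx₀
  exact (hx₀min y hy).not_gt hyx

end FiniteDimensional

theorem qFW_affine_preimage {n m : ℕ}
    (T : EuclideanSpace ℝ (Fin n) →ᵃ[ℝ] EuclideanSpace ℝ (Fin m))
    (F : Set (EuclideanSpace ℝ (Fin m))) (hF : IsQFWSet F)
    (hne : (T ⁻¹' F).Nonempty) :
    IsQFWSet (T ⁻¹' F) :=
  (hF.noFAsymptote.preimage T).isQFWSet (hF.1.affine_preimage T) hne
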